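/- arXiv:1711.04863 — 7 statements merged into one kernel-verified Lean document; each statement's English description precedes it below -/
import Mathlib

section
/- Let P be the matrix of a nonzero orthogonal projection on ℝⁿ and let A be a nonzero symmetric n×n real matrix. Then the spectral radius of PA satisfies ρ(PA) ≤ sup{ ‖Av‖₂ / ‖v‖₂ : v ∈ Ran(P), v ≠ 0 }, i.e. every (complex) eigenvalue μ of PA satisfies |μ| ≤ the operator norm of the restriction of A to Ran(P). -/
/-!
If `P A v = μ v` with `μ ≠ 0`, then `v = P (μ⁻¹ A v)`, so the real and imaginary parts of `v`
lie in `Ran(P)`. An orthogonal projection is a contraction, hence `|μ| ‖v‖ = ‖P A v‖ ≤ ‖A v‖`,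
and splitting into real and imaginary parts, `‖A v‖² = ‖A (Re v)‖² + ‖A (Im v)‖²`, which is at
most `S² ‖v‖²` for the supremum `S` of `‖A u‖ / ‖u‖` over `Ran(P)`.
-/

open Matrix Complex WithLp

section Complexification

variable {ι κ : Type*} [Fintype ι]

lemma norm_toLp_sq_eq_re_add_im (w : ι → ℂ) :
    ‖toLp 2 w‖ ^ 2 = ‖toLp 2 (re ∘ w)‖ ^ 2 + ‖toLp 2 (im ∘ w)‖ ^ 2 := by
  simp only [EuclideanSpace.norm_sq_eq, ← Finset.sum_add_distrib]
  congr 1 with i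
  rw [Complex.sq_norm, normSq_apply]
  simp [sq]

lemma re_comp_map_ofReal_mulVec (M : Matrix κ ι ℝ) (w : ι → ℂ) :
    re ∘ (M.map ofReal *ᵥ w) = M *ᵥ (re ∘ w) := by
  ext i
  simp [mulVec, dotProduct, re_sum]

lemma im_comp_map_ofReal_mulVec (M : Matrix κ ι ℝ) (w : ι → ℂ) :
    im ∘ (M.map ofReal *ᵥ w) = M *ᵥ (im ∘ w) := by
  ext i
  simp [mulVec, dotProduct, im_sum]

lemma norm_map_ofReal_mulVec_le [Fintype κ] {M : Matrix κ ι ℝ} {V : Submodule ℝ (ι → ℝ)}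
    {c : ℝ} (hc : 0 ≤ c) (hM : ∀ u ∈ V, ‖toLp 2 (M *ᵥ u)‖ ≤ c * ‖toLp 2 u‖) {w : ι → ℂ}
    (hre : re ∘ w ∈ V) (him : im ∘ w ∈ V) :
    ‖toLp 2 (M.map ofReal *ᵥ w)‖ ≤ c * ‖toLp 2 w‖ := by
  rw [← sq_le_sq₀ (norm_nonneg _) (by positivity), mul_pow, norm_toLp_sq_eq_re_add_im,
    norm_toLp_sq_eq_re_add_im, re_comp_map_ofReal_mulVec, im_comp_map_ofReal_mulVec, mul_add,
    ← mul_pow, ← mul_pow]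
  gcongr
  exacts [hM _ hre, hM _ him]

end Complexification

lemma norm_mulVec_le_of_isStarProjection {𝕜 ι : Type*} [RCLike 𝕜] [Fintype ι] [DecidableEq ι]
    {P : Matrix ι ι 𝕜} (hP : IsStarProjection P) (x : ι → 𝕜) :
    ‖toLp 2 (P *ᵥ x)‖ ≤ ‖toLp 2 x‖ :=
  ((toEuclideanCLM (𝕜 := 𝕜) P).le_opNorm (toLp 2 x)).trans <|
    mul_le_of_le_one_left (norm_nonneg _) (hP.map toEuclideanCLM).norm_le

section OpNormOn

variable {ι κ : Type*} [Fintype ι]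

lemma sqrt_dotProduct_self_eq_norm (v : ι → ℝ) : √(v ⬝ᵥ v) = ‖toLp 2 v‖ := by
  simp [EuclideanSpace.norm_eq, dotProduct, sq]

variable [Fintype κ]

noncomputable def opNormOn (A : Matrix κ ι ℝ) (V : Submodule ℝ (ι → ℝ)) : ℝ :=
  sSup {r | ∃ v ∈ V, v ≠ 0 ∧ r = √(A *ᵥ v ⬝ᵥ A *ᵥ v) / √(v ⬝ᵥ v)}

lemma opNormOn_nonneg (A : Matrix κ ι ℝ) (V : Submodule ℝ (ι → ℝ)) : 0 ≤ opNormOn A V :=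
  Real.sSup_nonneg fun _ ⟨_, _, _, hr⟩ => hr ▸ by positivity

open scoped Matrix.Norms.L2Operator in
lemma norm_mulVec_le_opNormOn {A : Matrix κ ι ℝ} {V : Submodule ℝ (ι → ℝ)} {v : ι → ℝ}
    (hv : v ∈ V) : ‖toLp 2 (A *ᵥ v)‖ ≤ opNormOn A V * ‖toLp 2 v‖ := by
  classical
  rcases eq_or_ne v 0 with rfl | hv0
  · simp
  have hbdd : BddAbove {r | ∃ v ∈ V, v ≠ 0 ∧ r = √(A *ᵥ v ⬝ᵥ A *ᵥ v) / √(v ⬝ᵥ v)} := by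
    refine ⟨‖A‖, ?_⟩
    rintro _ ⟨u, -, -, rfl⟩
    rw [sqrt_dotProduct_self_eq_norm, sqrt_dotProduct_self_eq_norm]
    exact div_le_of_le_mul₀ (norm_nonneg _) (norm_nonneg _) (l2_opNorm_mulVec A (toLp 2 u))
  rw [← div_le_iff₀ (by simpa using hv0), ← sqrt_dotProduct_self_eq_norm,
    ← sqrt_dotProduct_self_eq_norm]
  exact le_csSup hbdd ⟨v, hv, hv0, rfl⟩

end OpNormOn

theorem spectral_radius_proj_mul_symm_le_general {n : ℕ}
    (P A : Matrix (Fin n) (Fin n) ℝ)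
    (hP2 : P * P = P) (hPsym : Pᵀ = P) :
    ∀ μ : ℂ,
      (∃ v : Fin n → ℂ, v ≠ 0 ∧
          ((P * A).map (fun r : ℝ => (r : ℂ))).mulVec v = μ • v) →
      ‖μ‖ ≤
        sSup {r : ℝ | ∃ v : Fin n → ℝ, v ∈ LinearMap.range P.mulVecLin ∧ v ≠ 0 ∧
          r = Real.sqrt (A.mulVec v ⬝ᵥ A.mulVec v) / Real.sqrt (v ⬝ᵥ v)} := by
  rintro μ ⟨v, hv0, hv⟩
  change ‖μ‖ ≤ opNormOn A (LinearMap.range P.mulVecLin)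
  rcases eq_or_ne μ 0 with rfl | hμ
  · simpa using opNormOn_nonneg A _
  have hP : IsStarProjection P := ⟨hP2, by
    rw [IsSelfAdjoint, star_eq_conjTranspose, conjTranspose_eq_transpose_of_trivial, hPsym]⟩
  rw [show (P * A).map ofReal = P.map ofReal * A.map ofReal from Matrix.map_mul (f := ofRealHom),
    ← mulVec_mulVec] at hv
  have hv_eq : P.map ofReal *ᵥ (μ⁻¹ • A.map ofReal *ᵥ v) = v := by
    rw [mulVec_smul, hv, inv_smul_smul₀ hμ]
  have hre : re ∘ v ∈ LinearMap.range P.mulVecLin :=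
    ⟨_, by rw [← hv_eq, re_comp_map_ofReal_mulVec]; rfl⟩
  have him : im ∘ v ∈ LinearMap.range P.mulVecLin :=
    ⟨_, by rw [← hv_eq, im_comp_map_ofReal_mulVec]; rfl⟩
  have hv_norm : 0 < ‖toLp 2 v‖ := by simpa using hv0
  refine le_of_mul_le_mul_right ?_ hv_norm
  calc ‖μ‖ * ‖toLp 2 v‖ = ‖toLp 2 (P.map ofReal *ᵥ A.map ofReal *ᵥ v)‖ := by
        rw [hv, toLp_smul, norm_smul]
    _ ≤ 1 * ‖toLp 2 (A.map ofReal *ᵥ v)‖ :=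
        norm_map_ofReal_mulVec_le (V := ⊤) zero_le_one
          (fun u _ => by simpa using norm_mulVec_le_of_isStarProjection hP u) trivial trivial
    _ ≤ opNormOn A _ * ‖toLp 2 v‖ := by
        rw [one_mul]
        exact norm_map_ofReal_mulVec_le (opNormOn_nonneg A _)
          (fun _ hu => norm_mulVec_le_opNormOn hu) hre him

/-- For a nonzero orthogonal projection matrix `P` and a nonzero symmetric
matrix `A` on `ℝⁿ`, every complex eigenvalue `μ` of `PA` satisfies
`|μ| ≤ sup { ‖Av‖₂ / ‖v‖₂ : v ∈ Ran(P), v ≠ 0 }`, i.e. the spectral radius of `PA` is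
bounded by the operator norm of the restriction of `A` to `Ran(P)`. -/
theorem spectral_radius_proj_mul_symm_le {n : ℕ}
    (P A : Matrix (Fin n) (Fin n) ℝ)
    (hP2 : P * P = P) (hPsym : Pᵀ = P) (hP0 : P ≠ 0)
    (hAsym : Aᵀ = A) (hA0 : A ≠ 0) :
    ∀ μ : ℂ,
      (∃ v : Fin n → ℂ, v ≠ 0 ∧
          ((P * A).map (fun r : ℝ => (r : ℂ))).mulVec v = μ • v) →
      ‖μ‖ ≤
        sSup {r : ℝ | ∃ v : Fin n → ℝ, v ∈ LinearMap.range P.mulVecLin ∧ v ≠ 0 ∧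
          r = Real.sqrt (A.mulVec v ⬝ᵥ A.mulVec v) / Real.sqrt (v ⬝ᵥ v)} :=
  spectral_radius_proj_mul_symm_le_general P A hP2 hPsym
end

section
/- Let f : ℝⁿ → ℝ be twice continuously differentiable and let x* be a point with ∇f(x*) = 0 whose Hessian matrix D²f(x*) is positive definite; let μ₁ denote the largest eigenvalue of D²f(x*). Then for every step length η with 0 < η < 2/μ₁ there exists r > 0 such that for every x⁽⁰⁾ in the closed Euclidean ball of radius r around x*, the steepest descent iterates x⁽ᵏ⁺¹⁾ = x⁽ᵏ⁾ − η ∇f(x⁽ᵏ⁾) remain in that ball and converge linearly to x*: there exists L ∈ (0,1) such that ‖x⁽ᵏ⁾ − x*‖₂ ≤ Lᵏ ‖x⁽⁰⁾ − x*‖₂ for all k. -/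
/-!
The steepest-descent map `g x = x - η • ∇f x` fixes `x*`, and its derivative there is
`1 - η • H`. Since `H` is symmetric with eigenvalues `0 < λ ≤ μ₁ < 2 / η`, this derivative is
diagonal in an orthonormal eigenbasis with entries `|1 - η λ| < 1`, so its operator norm is `< 1`.
As `g` is `C¹`, it is then Lipschitz with a constant `L < 1` on a small closed ball around `x*`,
and the iterates contract towards `x*` geometrically.
-/

open Matrix Metric
open scoped NNReal

theorem ContinuousLinearMap.opNNNorm_le_sup_of_apply_eq_smul {ι 𝕜 E : Type*} [Fintype ι]
    [RCLike 𝕜] [NormedAddCommGroup E] [InnerProductSpace 𝕜 E]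
    (T : E →L[𝕜] E) (b : OrthonormalBasis ι 𝕜 E) (μ : ι → 𝕜) (hT : ∀ i, T (b i) = μ i • b i) :
    ‖T‖₊ ≤ Finset.univ.sup fun i => ‖μ i‖₊ := by
  classical
  set c := Finset.univ.sup fun i => ‖μ i‖₊
  refine T.opNNNorm_le_bound c fun v => ?_
  have hrepr : ∀ i, b.repr (T v) i = μ i * b.repr v i := by
    intro i
    conv_lhs => rw [← b.sum_repr v]
    simp [hT, b.repr_self, Pi.single_apply, mul_comm]
  rw [← b.repr.nnnorm_map (T v), ← b.repr.nnnorm_map v, EuclideanSpace.nnnorm_eq,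
    EuclideanSpace.nnnorm_eq, ← NNReal.sqrt_sq c, ← NNReal.sqrt_mul, NNReal.sqrt_le_sqrt,
    Finset.mul_sum]
  gcongr with i
  rw [hrepr, nnnorm_mul, mul_pow]
  gcongr
  exact Finset.le_sup (f := fun i => ‖μ i‖₊) (Finset.mem_univ i)

theorem Matrix.PosDef.nnnorm_toEuclideanCLM_one_sub_smul_lt_one {ι : Type*} [Fintype ι]
    [DecidableEq ι] {H : Matrix ι ι ℝ} (hH : H.PosDef) {μ₁ : ℝ}
    (hμ₁ : μ₁ ∈ upperBounds {μ : ℝ | ∃ v : ι → ℝ, v ≠ 0 ∧ H *ᵥ v = μ • v})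
    {η : ℝ} (hη : 0 < η) (hη₁ : η < 2 / μ₁) :
    ‖toEuclideanCLM (n := ι) (𝕜 := ℝ) (1 - η • H)‖₊ < 1 := by
  set b := hH.isHermitian.eigenvectorBasis
  set μ := hH.isHermitian.eigenvalues
  have hb : ∀ i, toEuclideanCLM (n := ι) (𝕜 := ℝ) (1 - η • H) (b i) = (1 - η * μ i) • b i := by
    intro i
    ext1
    simp [b, μ, hH.isHermitian.mulVec_eigenvectorBasis, sub_smul, mul_smul]
  have hμ_le : ∀ i, μ i ≤ μ₁ := fun i =>
    hμ₁ ⟨b i, by simpa using b.orthonormal.ne_zero i, hH.isHermitian.mulVec_eigenvectorBasis i⟩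
  refine (ContinuousLinearMap.opNNNorm_le_sup_of_apply_eq_smul _ b _ hb).trans_lt ?_
  refine (Finset.sup_lt_iff zero_lt_one).2 fun i _ => ?_
  have hμ_pos := hH.eigenvalues_pos i
  rw [lt_div_iff₀ (hμ_pos.trans_le (hμ_le i))] at hη₁
  rw [← NNReal.coe_lt_coe, coe_nnnorm, Real.norm_eq_abs, NNReal.coe_one, abs_lt]
  constructor <;> nlinarith [hμ_le i]

theorem fderiv_gradient_apply {ι : Type*} [Fintype ι] [DecidableEq ι]
    {f : EuclideanSpace ℝ ι → ℝ} {x : EuclideanSpace ℝ ι}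
    (hf : DifferentiableAt ℝ (fderiv ℝ f) x) (v : EuclideanSpace ℝ ι) (j : ι) :
    fderiv ℝ (gradient f) x v j =
      fderiv ℝ (fun y => fderiv ℝ f y (EuclideanSpace.single j 1)) x v := by
  have hgrad : DifferentiableAt ℝ (gradient f) x :=
    (InnerProductSpace.toDual ℝ _).symm.toContinuousLinearEquiv.differentiableAt.comp x hf
  have hcoord : (fun y => fderiv ℝ f y (EuclideanSpace.single j 1)) =
      EuclideanSpace.proj j ∘ gradient f := by
    ext y
    simp [← inner_gradient_left, EuclideanSpace.inner_single_right]
  rw [hcoord, fderiv_comp x (EuclideanSpace.proj j).differentiableAt hgrad,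
    ContinuousLinearMap.fderiv]
  rfl

theorem fderiv_gradient_eq_toEuclideanCLM {ι : Type*} [Fintype ι] [DecidableEq ι]
    {f : EuclideanSpace ℝ ι → ℝ} {x : EuclideanSpace ℝ ι}
    (hf : DifferentiableAt ℝ (fderiv ℝ f) x) {H : Matrix ι ι ℝ} (hsymm : H.IsSymm)
    (hH : ∀ i j, H i j = fderiv ℝ (fun y => fderiv ℝ f y (EuclideanSpace.single j 1)) x
      (EuclideanSpace.single i 1)) :
    fderiv ℝ (gradient f) x = toEuclideanCLM (n := ι) (𝕜 := ℝ) H := by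
  refine ContinuousLinearMap.coe_injective <|
    (EuclideanSpace.basisFun ι ℝ).toBasis.ext fun i => ?_
  ext j
  simp [fderiv_gradient_apply hf, ← hH, hsymm.apply]

theorem ContDiffAt.exists_closedBall_norm_sub_le_mul_of_isFixedPt {E : Type*}
    [NormedAddCommGroup E] [NormedSpace ℝ E] {g : E → E} {x : E} (hg : ContDiffAt ℝ 1 g x)
    (hx : Function.IsFixedPt g x) (hg' : ‖fderiv ℝ g x‖₊ < 1) :
    ∃ r > 0, ∃ L : ℝ, 0 < L ∧ L < 1 ∧ ∀ y ∈ closedBall x r, ‖g y - x‖ ≤ L * ‖y - x‖ := by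
  set K : ℝ≥0 := (1 + ‖fderiv ℝ g x‖₊) / 2
  have hg'_lt : ‖fderiv ℝ g x‖ < 1 := by exact_mod_cast hg'
  have hK : ‖fderiv ℝ g x‖₊ < K := by
    rw [← NNReal.coe_lt_coe]
    push_cast [K]
    linarith
  have hK₁ : (K : ℝ) < 1 := by
    push_cast [K]
    linarith
  obtain ⟨t, ht, hlip⟩ := hg.exists_lipschitzOnWith_of_nnnorm_lt K hK
  obtain ⟨r, hr, hrt⟩ := nhds_basis_closedBall.mem_iff.1 ht
  refine ⟨r, hr, K, by positivity, hK₁, fun y hy => ?_⟩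
  simpa [hx.eq, dist_eq_norm] using hlip.dist_le_mul y (hrt hy) x (hrt (mem_closedBall_self hr.le))

theorem norm_sub_le_pow_mul_of_forall_norm_map_sub_le {E : Type*} [SeminormedAddCommGroup E]
    {g : E → E} {c : E} {r L : ℝ} (hL₀ : 0 ≤ L) (hL₁ : L ≤ 1)
    (hg : ∀ y ∈ closedBall c r, ‖g y - c‖ ≤ L * ‖y - c‖)
    {x : ℕ → E} (hx : ∀ k, x (k + 1) = g (x k)) (h₀ : ‖x 0 - c‖ ≤ r) (k : ℕ) :
    ‖x k - c‖ ≤ L ^ k * ‖x 0 - c‖ := by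
  induction k with
  | zero => simp
  | succ k ih =>
    have hxk : x k ∈ closedBall c r := mem_closedBall_iff_norm.2 <|
      calc ‖x k - c‖ ≤ L ^ k * ‖x 0 - c‖ := ih
        _ ≤ ‖x 0 - c‖ := mul_le_of_le_one_left (norm_nonneg _) (pow_le_one₀ hL₀ hL₁)
        _ ≤ r := h₀
    calc ‖x (k + 1) - c‖ ≤ L * ‖x k - c‖ := hx k ▸ hg _ hxk
      _ ≤ L * (L ^ k * ‖x 0 - c‖) := by gcongr
      _ = L ^ (k + 1) * ‖x 0 - c‖ := by ring

/-- Local linear convergence of steepest descent. If `f : ℝⁿ → ℝ` is twice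
continuously differentiable, `∇f(x*) = 0`, the Hessian matrix `H` of `f` at `x*` is positive
definite with largest eigenvalue `μ₁`, then for every step length `0 < η < 2/μ₁` there is
`r > 0` such that for every starting point `x⁽⁰⁾` in the closed Euclidean ball of radius `r`
around `x*`, the iterates `x⁽ᵏ⁺¹⁾ = x⁽ᵏ⁾ − η ∇f(x⁽ᵏ⁾)` stay in the ball and converge
linearly to `x*`. -/
theorem steepest_descent_local_linear_convergence {n : ℕ}
    (f : EuclideanSpace ℝ (Fin n) → ℝ) (hf : ContDiff ℝ 2 f)
    (xstar : EuclideanSpace ℝ (Fin n)) (hcrit : gradient f xstar = 0)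
    (H : Matrix (Fin n) (Fin n) ℝ)
    (hH : ∀ i j, H i j =
      fderiv ℝ (fun y => fderiv ℝ f y (EuclideanSpace.single j 1)) xstar
        (EuclideanSpace.single i 1))
    (hpos : H.PosDef)
    (μ₁ : ℝ) (hμ₁ : IsGreatest {μ : ℝ | ∃ v : Fin n → ℝ, v ≠ 0 ∧ H.mulVec v = μ • v} μ₁) :
    ∀ η : ℝ, 0 < η → η < 2 / μ₁ →
      ∃ r > 0, ∃ L : ℝ, 0 < L ∧ L < 1 ∧
        ∀ x0 : EuclideanSpace ℝ (Fin n), ‖x0 - xstar‖ ≤ r →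
          ∀ xseq : ℕ → EuclideanSpace ℝ (Fin n), xseq 0 = x0 →
            (∀ k, xseq (k + 1) = xseq k - η • gradient f (xseq k)) →
            (∀ k, ‖xseq k - xstar‖ ≤ r) ∧
            (∀ k, ‖xseq k - xstar‖ ≤ L ^ k * ‖x0 - xstar‖) := by
  intro η hη hη₁
  have hDf : ContDiff ℝ 1 (fderiv ℝ f) := hf.fderiv_right (by norm_num)
  have hgrad : ContDiff ℝ 1 (gradient f) :=
    (InnerProductSpace.toDual ℝ _).symm.toContinuousLinearEquiv.contDiff.comp hDf
  set g := fun x => x - η • gradient f x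
  have hg : ContDiff ℝ 1 g := contDiff_id.sub (hgrad.const_smul η)
  have hfix : Function.IsFixedPt g xstar := by simp [g, Function.IsFixedPt, hcrit]
  have hDg : fderiv ℝ g xstar = toEuclideanCLM (n := Fin n) (𝕜 := ℝ) (1 - η • H) := by
    rw [map_sub, map_one, map_smul, ← fderiv_gradient_eq_toEuclideanCLM
      (hDf.differentiable one_ne_zero xstar) (isHermitian_iff_isSymm.1 hpos.isHermitian) hH]
    exact ((hasFDerivAt_id xstar).sub
      ((hgrad.differentiable one_ne_zero xstar).hasFDerivAt.const_smul η)).fderiv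
  obtain ⟨r, hr, L, hL₀, hL₁, hcontract⟩ :=
    hg.contDiffAt.exists_closedBall_norm_sub_le_mul_of_isFixedPt hfix
      (hDg ▸ hpos.nnnorm_toEuclideanCLM_one_sub_smul_lt_one hμ₁.2 hη hη₁)
  refine ⟨r, hr, L, hL₀, hL₁, fun x0 hx0 xseq h0 hrec => ?_⟩
  subst h0
  have hrate := norm_sub_le_pow_mul_of_forall_norm_map_sub_le hL₀.le hL₁.le hcontract hrec hx0
  refine ⟨fun k => (hrate k).trans ?_, hrate⟩
  exact (mul_le_of_le_one_left (norm_nonneg _) (pow_le_one₀ hL₀.le hL₁.le)).trans hx0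
end

section
/- Let g : ℝⁿ → ℝᵐ be twice continuously differentiable and let (x⁽ᵏ⁾) be a sequence converging to x* ∈ ℝⁿ such that Dg(x⁽ᵏ⁾)(x⁽ᵏ⁺¹⁾ − x⁽ᵏ⁾) = −g(x⁽ᵏ⁾) for every k. Suppose the convergence is linear with rate L ∈ (0,1), i.e. there is C ≥ 0 with ‖x⁽ᵏ⁾ − x*‖ ≤ C Lᵏ for all k. Then the constraint values converge to zero at the improved rate L²: there exists C′ ≥ 0 such that ‖g(x⁽ᵏ⁾)‖ ≤ C′ L²ᵏ for all k. -/
/-! Along the Newton-type step the linearisation of `g` at `x⁽ᵏ⁾` vanishes at `x⁽ᵏ⁺¹⁾`, so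
`g(x⁽ᵏ⁺¹⁾)` is exactly the first-order Taylor remainder of `g` between consecutive iterates.
Since `Dg` is Lipschitz on a compact convex set containing the iterates, this remainder is
`O(‖x⁽ᵏ⁺¹⁾ − x⁽ᵏ⁾‖²) = O(L²ᵏ)`. -/

open Metric
open scoped NNReal

section TaylorRemainder

variable {E F : Type*} [NormedAddCommGroup E] [NormedSpace ℝ E]
  [NormedAddCommGroup F] [NormedSpace ℝ F] {f : E → F} {s : Set E}

theorem Convex.norm_image_sub_sub_fderiv_le {K : ℝ≥0} (hs : Convex ℝ s)
    (hf : ∀ x ∈ s, DifferentiableAt ℝ f x) (hlip : LipschitzOnWith K (fderiv ℝ f) s)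
    {a b : E} (ha : a ∈ s) (hb : b ∈ s) :
    ‖f b - f a - fderiv ℝ f a (b - a)‖ ≤ K * ‖b - a‖ ^ 2 := by
  have hseg : segment ℝ a b ⊆ s := hs.segment_subset ha hb
  have hbound : ∀ z ∈ segment ℝ a b, ‖fderiv ℝ f z - fderiv ℝ f a‖ ≤ K * ‖b - a‖ := by
    intro z hz
    calc ‖fderiv ℝ f z - fderiv ℝ f a‖ ≤ K * ‖z - a‖ :=
          hlip.norm_sub_le (hseg hz) ha
      _ ≤ K * ‖b - a‖ := by gcongr; exact norm_sub_le_of_mem_segment hz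
  calc ‖f b - f a - fderiv ℝ f a (b - a)‖ ≤ K * ‖b - a‖ * ‖b - a‖ :=
        (convex_segment a b).norm_image_sub_le_of_norm_fderiv_le'
          (fun z hz => hf z (hseg hz)) hbound (left_mem_segment ℝ a b) (right_mem_segment ℝ a b)
    _ = K * ‖b - a‖ ^ 2 := by ring

theorem ContDiff.exists_norm_image_sub_sub_fderiv_le (hf : ContDiff ℝ 2 f) (hs : Convex ℝ s)
    (hs' : IsCompact s) :
    ∃ K : ℝ≥0, ∀ a ∈ s, ∀ b ∈ s, ‖f b - f a - fderiv ℝ f a (b - a)‖ ≤ K * ‖b - a‖ ^ 2 := by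
  obtain ⟨K, hK⟩ := (hf.fderiv_right (m := 1) le_rfl).locallyLipschitz.locallyLipschitzOn
    |>.exists_lipschitzOnWith_of_compact hs'
  exact ⟨K, fun a ha b hb =>
    hs.norm_image_sub_sub_fderiv_le (fun z _ => hf.differentiable two_ne_zero z) hK ha hb⟩

end TaylorRemainder

theorem exists_le_mul_pow_of_succ_le {a : ℕ → ℝ} {q A : ℝ} (hq : 0 < q)
    (h : ∀ k, a (k + 1) ≤ A * q ^ k) : ∃ C, 0 ≤ C ∧ ∀ k, a k ≤ C * q ^ k := by
  refine ⟨|a 0| + |A| / q, by positivity, fun k => ?_⟩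
  cases k with
  | zero => simpa using (le_abs_self (a 0)).trans (le_add_of_nonneg_right (by positivity))
  | succ k =>
    calc a (k + 1) ≤ |A| * q ^ k := (h k).trans (by gcongr; exact le_abs_self A)
      _ = |A| / q * q ^ (k + 1) := by field_simp; ring
      _ ≤ (|a 0| + |A| / q) * q ^ (k + 1) := by gcongr; exact le_add_of_nonneg_left (abs_nonneg _)

theorem newton_condition_constraints_improved_rate_general {n m : ℕ}
    (g : EuclideanSpace ℝ (Fin n) → EuclideanSpace ℝ (Fin m)) (hg : ContDiff ℝ 2 g)
    (x : ℕ → EuclideanSpace ℝ (Fin n)) (xstar : EuclideanSpace ℝ (Fin n))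
    (hstep : ∀ k, fderiv ℝ g (x k) (x (k + 1) - x k) = - g (x k))
    (L : ℝ) (hL0 : 0 < L) (hL1 : L < 1)
    (C : ℝ) (hC : 0 ≤ C) (hrate : ∀ k, ‖x k - xstar‖ ≤ C * L ^ k) :
    ∃ C' : ℝ, 0 ≤ C' ∧ ∀ k, ‖g (x k)‖ ≤ C' * (L ^ 2) ^ k := by
  have hmem : ∀ k, x k ∈ closedBall xstar C := fun k => by
    rw [mem_closedBall, dist_eq_norm]
    exact (hrate k).trans (mul_le_of_le_one_right hC (pow_le_one₀ hL0.le hL1.le))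
  obtain ⟨K, hK⟩ :=
    hg.exists_norm_image_sub_sub_fderiv_le (convex_closedBall xstar C) (isCompact_closedBall _ _)
  have hjump : ∀ k, ‖x (k + 1) - x k‖ ≤ C * (1 + L) * L ^ k := fun k =>
    calc ‖x (k + 1) - x k‖ = ‖(x (k + 1) - xstar) - (x k - xstar)‖ := by
          rw [sub_sub_sub_cancel_right]
      _ ≤ ‖x (k + 1) - xstar‖ + ‖x k - xstar‖ := norm_sub_le _ _
      _ ≤ C * L ^ (k + 1) + C * L ^ k := add_le_add (hrate _) (hrate _)
      _ = C * (1 + L) * L ^ k := by ring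
  have hsucc : ∀ k, ‖g (x (k + 1))‖ ≤ K * (C * (1 + L)) ^ 2 * (L ^ 2) ^ k := fun k =>
    calc ‖g (x (k + 1))‖
        = ‖g (x (k + 1)) - g (x k) - fderiv ℝ g (x k) (x (k + 1) - x k)‖ := by
          rw [hstep k, sub_neg_eq_add, sub_add_cancel]
      _ ≤ K * ‖x (k + 1) - x k‖ ^ 2 := hK _ (hmem k) _ (hmem (k + 1))
      _ ≤ K * (C * (1 + L) * L ^ k) ^ 2 := by gcongr; exact hjump k
      _ = K * (C * (1 + L)) ^ 2 * (L ^ 2) ^ k := by ring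
  exact exists_le_mul_pow_of_succ_le (by positivity) hsucc

/-- If `g : ℝⁿ → ℝᵐ` is twice continuously differentiable and the sequence
`x⁽ᵏ⁾` converges linearly with rate `L ∈ (0,1)` to `x*` while satisfying the Newton-type
condition `Dg(x⁽ᵏ⁾)(x⁽ᵏ⁺¹⁾ − x⁽ᵏ⁾) = −g(x⁽ᵏ⁾)`, then the constraint values converge to zero
at the improved rate `L²`: there is `C′ ≥ 0` with `‖g(x⁽ᵏ⁾)‖ ≤ C′ (L²)ᵏ` for all `k`. -/
theorem newton_condition_constraints_improved_rate {n m : ℕ}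
    (g : EuclideanSpace ℝ (Fin n) → EuclideanSpace ℝ (Fin m)) (hg : ContDiff ℝ 2 g)
    (x : ℕ → EuclideanSpace ℝ (Fin n)) (xstar : EuclideanSpace ℝ (Fin n))
    (hconv : Filter.Tendsto x Filter.atTop (nhds xstar))
    (hstep : ∀ k, fderiv ℝ g (x k) (x (k + 1) - x k) = - g (x k))
    (L : ℝ) (hL0 : 0 < L) (hL1 : L < 1)
    (C : ℝ) (hC : 0 ≤ C) (hrate : ∀ k, ‖x k - xstar‖ ≤ C * L ^ k) :
    ∃ C' : ℝ, 0 ≤ C' ∧ ∀ k, ‖g (x k)‖ ≤ C' * (L ^ 2) ^ k :=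
  newton_condition_constraints_improved_rate_general g hg x xstar hstep L hL0 hL1 C hC hrate
end

section
/- Let g : ℝⁿ → ℝᵐ be continuously differentiable and let x* be a regular point of the set M = {x ∈ ℝⁿ : g(x) = 0}, i.e. g(x*) = 0 and Dg(x*) has full rank m. Then there exist a neighborhood U of x* and constants c₁, c₂ > 0 such that for every x ∈ U, c₁ · dist(x, M) ≤ ‖g(x)‖ ≤ c₂ · dist(x, M), where dist(x, M) = inf{‖x − y‖ : y ∈ M}; in particular ‖g(x)‖ is of the same order of magnitude as the distance from x to the constraint manifold M. -/
/-!
Upper bound: strict differentiability makes `g` Lipschitz near `x*`, and `g` vanishes on `M`, so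
`‖g x‖ ≤ K · dist(x, y)` for every `y ∈ M` (a zero `y` far from `x` is beaten by `x*` itself).
Lower bound: by the open mapping theorem the surjective derivative has a bounded nonlinear right
inverse, and the quantitative local surjectivity of maps approximated by it (the Lyusternik–Graves
argument behind the inverse function theorem) produces a zero of `g` within distance `O(‖g x‖)`
of `x`.
-/

open Metric Set Filter Topology
open scoped NNReal

section UpperBound

variable {X F : Type*} [PseudoMetricSpace X] [SeminormedAddCommGroup F]

theorem LipschitzOnWith.eventually_norm_le_mul_infDist_zeroSet {f : X → F} {K : ℝ≥0}
    {s : Set X} {a : X} (hf : LipschitzOnWith K f s) (hs : s ∈ 𝓝 a) (ha : f a = 0) :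
    ∀ᶠ x in 𝓝 a, ‖f x‖ ≤ K * infDist x {y | f y = 0} := by
  obtain ⟨r, hr, hball⟩ := Metric.mem_nhds_iff.1 hs
  filter_upwards [ball_mem_nhds a (half_pos hr)] with x hx
  rw [mem_ball] at hx
  have hxs : x ∈ s := hball (mem_ball.2 (by linarith))
  have bound : ∀ y ∈ {y | f y = 0}, ‖f x‖ ≤ K * dist x y := by
    intro y (hy : f y = 0)
    rcases lt_or_ge (dist x y) (r / 2) with hnear | hfar
    · have hys : y ∈ s := hball (mem_ball.2 (by linarith [dist_triangle_left y a x]))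
      simpa [hy] using hf.dist_le_mul x hxs y hys
    · calc ‖f x‖ = dist (f x) (f a) := by simp [ha]
        _ ≤ K * dist x a := hf.dist_le_mul x hxs a (hball (mem_ball_self hr))
        _ ≤ K * dist x y := by gcongr; linarith
  have : Nonempty {y | f y = 0} := ⟨⟨a, ha⟩⟩
  rw [infDist_eq_iInf, Real.mul_iInf_of_nonneg K.coe_nonneg]
  exact le_ciInf fun y => bound y y.2

end UpperBound

section LowerBound

variable {𝕜 E F : Type*} [NontriviallyNormedField 𝕜] [NormedAddCommGroup E] [NormedSpace 𝕜 E]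
  [CompleteSpace E] [NormedAddCommGroup F] [NormedSpace 𝕜 F] {f : E → F} {f' : E →L[𝕜] F}

theorem ApproximatesLinearOn.mul_infDist_zeroSet_le {s : Set E} {c : ℝ≥0}
    (hf : ApproximatesLinearOn f f' s c) (f'symm : f'.NonlinearRightInverse)
    (hc : (c : ℝ) < (f'symm.nnnorm : ℝ)⁻¹) {x : E}
    (hx : closedBall x (‖f x‖ / ((f'symm.nnnorm : ℝ)⁻¹ - c)) ⊆ s) :
    ((f'symm.nnnorm : ℝ)⁻¹ - c) * infDist x {y | f y = 0} ≤ ‖f x‖ := by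
  set κ := (f'symm.nnnorm : ℝ)⁻¹ - c
  have hκ : 0 < κ := sub_pos.2 hc
  have hzero : (0 : F) ∈ closedBall (f x) (κ * (‖f x‖ / κ)) := by
    rw [mem_closedBall, dist_zero_left, mul_div_cancel₀ _ hκ.ne']
  obtain ⟨y, hy, hfy⟩ :=
    hf.surjOn_closedBall_of_nonlinearRightInverse f'symm (by positivity) hx hzero
  calc κ * infDist x {y | f y = 0} ≤ κ * (‖f x‖ / κ) := by
        gcongr
        exact (infDist_le_dist_of_mem (s := {y | f y = 0}) hfy).trans (mem_closedBall_comm.1 hy)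
    _ = ‖f x‖ := mul_div_cancel₀ _ hκ.ne'

theorem HasStrictFDerivAt.exists_pos_eventually_mul_infDist_zeroSet_le [CompleteSpace F] {a : E}
    (hf : HasStrictFDerivAt f f' a) (hsurj : f'.range = ⊤) (ha : f a = 0) :
    ∃ c > 0, ∀ᶠ x in 𝓝 a, c * infDist x {y | f y = 0} ≤ ‖f x‖ := by
  set f'symm := f'.nonlinearRightInverseOfSurjective hsurj
  have hpos := f'.nonlinearRightInverseOfSurjective_nnnorm_pos hsurj
  set c : ℝ≥0 := f'symm.nnnorm⁻¹ / 2
  have hc : (0 : ℝ) < c := by positivity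
  have hκ : (f'symm.nnnorm : ℝ)⁻¹ - c = c := by simp only [c]; push_cast; ring
  obtain ⟨s, hs, happrox⟩ := hf.approximates_deriv_on_nhds (Or.inr hc)
  obtain ⟨r, hr, hball⟩ := nhds_basis_closedBall.mem_iff.1 hs
  have hsmall : ∀ᶠ x in 𝓝 a, ‖f x‖ < c * (r / 2) := by
    have : Tendsto f (𝓝 a) (𝓝 0) := ha ▸ hf.continuousAt.tendsto
    exact (tendsto_zero_iff_norm_tendsto_zero.1 this).eventually (gt_mem_nhds (by positivity))
  refine ⟨c, hc, ?_⟩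
  filter_upwards [hsmall, ball_mem_nhds a (half_pos hr)] with x hfx hx
  rw [← hκ]
  refine happrox.mul_infDist_zeroSet_le f'symm (by linarith)
    ((closedBall_subset_closedBall' ?_).trans hball)
  have : ‖f x‖ / c < r / 2 := (div_lt_iff₀ hc).2 (by linarith)
  rw [hκ]
  linarith [mem_ball.1 hx]

end LowerBound

/-- If `g : ℝⁿ → ℝᵐ` is continuously differentiable and `x*` is a regular point
of `M = {x : g(x) = 0}` (i.e. `g(x*) = 0` and `Dg(x*)` has full rank `m`, equivalently the
derivative is surjective), then there are a neighborhood `U` of `x*` and constants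
`c₁, c₂ > 0` such that `c₁ · dist(x, M) ≤ ‖g(x)‖ ≤ c₂ · dist(x, M)` for all `x ∈ U`. -/
theorem norm_constraint_comparable_to_dist {n m : ℕ}
    (g : EuclideanSpace ℝ (Fin n) → EuclideanSpace ℝ (Fin m)) (hg : ContDiff ℝ 1 g)
    (xstar : EuclideanSpace ℝ (Fin n)) (hfeas : g xstar = 0)
    (hreg : Function.Surjective (fderiv ℝ g xstar)) :
    ∃ U ∈ nhds xstar, ∃ c₁ : ℝ, 0 < c₁ ∧ ∃ c₂ : ℝ, 0 < c₂ ∧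
      ∀ x ∈ U,
        c₁ * Metric.infDist x {y : EuclideanSpace ℝ (Fin n) | g y = 0} ≤ ‖g x‖ ∧
        ‖g x‖ ≤ c₂ * Metric.infDist x {y : EuclideanSpace ℝ (Fin n) | g y = 0} := by
  have hstrict : HasStrictFDerivAt g (fderiv ℝ g xstar) xstar :=
    hg.contDiffAt.hasStrictFDerivAt one_ne_zero
  obtain ⟨c₁, hc₁, hlower⟩ :=
    hstrict.exists_pos_eventually_mul_infDist_zeroSet_le (LinearMap.range_eq_top.2 hreg) hfeas
  obtain ⟨s, hs, hlip⟩ :=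
    hstrict.exists_lipschitzOnWith_of_nnnorm_lt (‖fderiv ℝ g xstar‖₊ + 1) (lt_add_one _)
  exact ⟨_, hlower.and (hlip.eventually_norm_le_mul_infDist_zeroSet hs hfeas), c₁, hc₁,
    _, by positivity, fun x hx => hx⟩
end

section
/- Let f : ℝⁿ → ℝ and g : ℝⁿ → ℝᵐ (m < n) be twice continuously differentiable, and let x* be a regular point satisfying the KKT conditions with multiplier λ* ∈ ℝᵐ. Define, for x near x*, P(x) = I − ∇g(x)[Dg(x)∇g(x)]⁻¹Dg(x), K(x) = ∇g(x)[Dg(x)∇g(x)]⁻¹, and the iteration map S(x) = x − η P(x) ∇f(x) − K(x) g(x) for a fixed η > 0. Then S is well defined and continuously differentiable on a neighborhood of x*, and its Jacobian at x* is DS(x*) = P(x*) (I − η H*), where H* = D²f(x*) + Σᵢ₌₁ᵐ λ*ᵢ D²gᵢ(x*). -/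
open Matrix

/-- The Jacobian matrix `Dg(x)` of `g : ℝⁿ → ℝᵐ` at `x`. -/
noncomputable def jacobianMatrix {n m : ℕ} (g : (Fin n → ℝ) → (Fin m → ℝ))
    (x : Fin n → ℝ) : Matrix (Fin m) (Fin n) ℝ :=
  fun i j => fderiv ℝ g x (Pi.single j 1) i

/-- The gradient vector `∇f(x)` of `f : ℝⁿ → ℝ` at `x`. -/
noncomputable def gradientVec {n : ℕ} (f : (Fin n → ℝ) → ℝ)
    (x : Fin n → ℝ) : Fin n → ℝ :=
  fun j => fderiv ℝ f x (Pi.single j 1)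

/-- The Hessian matrix `D²f(x)` of `f : ℝⁿ → ℝ` at `x`. -/
noncomputable def hessianMatrix {n : ℕ} (f : (Fin n → ℝ) → ℝ)
    (x : Fin n → ℝ) : Matrix (Fin n) (Fin n) ℝ :=
  fun i j => fderiv ℝ (fun y => fderiv ℝ f y (Pi.single j 1)) x (Pi.single i 1)

/-- The projection matrix `P(x) = I − ∇g(x)[Dg(x)∇g(x)]⁻¹Dg(x)`. -/
noncomputable def projMatrix {n m : ℕ} (g : (Fin n → ℝ) → (Fin m → ℝ))
    (x : Fin n → ℝ) : Matrix (Fin n) (Fin n) ℝ :=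
  1 - (jacobianMatrix g x)ᵀ * (jacobianMatrix g x * (jacobianMatrix g x)ᵀ)⁻¹
        * jacobianMatrix g x

/-- The right-inverse matrix `K(x) = ∇g(x)[Dg(x)∇g(x)]⁻¹`. -/
noncomputable def rightInvMatrix {n m : ℕ} (g : (Fin n → ℝ) → (Fin m → ℝ))
    (x : Fin n → ℝ) : Matrix (Fin n) (Fin m) ℝ :=
  (jacobianMatrix g x)ᵀ * (jacobianMatrix g x * (jacobianMatrix g x)ᵀ)⁻¹

/-!
Where `Dg Dgᵀ` is invertible, `P` and `K` are obtained from `Dg` by products, transposes and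
inversion, so they are `C¹` when `g` is `C²`, and then so is `S`. Since `P Dgᵀ = 0` there,
`P ∇f = P ∇ₓL` for the gradient `∇ₓL = ∇f + Dgᵀ λ*` of the Lagrangian. Both `∇ₓL` and `g` vanish at
`x*`, so in the product rule at `x*` only their derivatives survive:
`DS(x*) = I − η P H* − K Dg = P (I − η H*)`, since `D(∇ₓL)(x*) = H*` by Schwarz and `K Dg = I − P`.
-/

-- With the `L∞` operator norm, square matrices form a complete normed ring, so inversion is smooth.
open scoped Matrix.Norms.Operator

section MatrixCalculus

variable {E : Type*} [NormedAddCommGroup E] [NormedSpace ℝ E] {k : WithTop ℕ∞}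
  {l m n : Type*} [Fintype l] [Fintype m] [Fintype n] {x : E}

theorem ContDiffAt.matrix_mul {A : E → Matrix l m ℝ} {B : E → Matrix m n ℝ}
    (hA : ContDiffAt ℝ k A x) (hB : ContDiffAt ℝ k B x) :
    ContDiffAt ℝ k (fun y => A y * B y) x :=
  let M : Matrix l m ℝ →ₗ[ℝ] Matrix m n ℝ →ₗ[ℝ] Matrix l n ℝ := mulLinearMap ℝ
  M.toContinuousBilinearMap.isBoundedBilinearMap.contDiff.comp_contDiffAt x (hA.prodMk hB)

theorem ContDiffAt.matrix_mulVec {A : E → Matrix m n ℝ} {w : E → n → ℝ}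
    (hA : ContDiffAt ℝ k A x) (hw : ContDiffAt ℝ k w x) :
    ContDiffAt ℝ k (fun y => A y *ᵥ w y) x :=
  let M : Matrix m n ℝ →ₗ[ℝ] (n → ℝ) →ₗ[ℝ] m → ℝ := mulVecBilin ℝ ℝ
  M.toContinuousBilinearMap.isBoundedBilinearMap.contDiff.comp_contDiffAt x (hA.prodMk hw)

theorem ContDiffAt.matrix_transpose {A : E → Matrix m n ℝ} (hA : ContDiffAt ℝ k A x) :
    ContDiffAt ℝ k (fun y => (A y)ᵀ) x :=
  (transposeLinearEquiv m n ℝ ℝ).toLinearMap.toContinuousLinearMap.contDiff.comp_contDiffAt x hA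

theorem ContDiffAt.matrix_inv [DecidableEq m] {A : E → Matrix m m ℝ}
    (hA : ContDiffAt ℝ k A x) (hx : IsUnit (A x)) : ContDiffAt ℝ k (fun y => (A y)⁻¹) x := by
  obtain ⟨u, hu⟩ := hx
  simp only [nonsing_inv_eq_ringInverse]
  exact (hu ▸ contDiffAt_ringInverse ℝ u).comp x hA

theorem HasFDerivAt.matrix_mulVec_of_eq_zero {A : E → Matrix m n ℝ} {w : E → n → ℝ}
    {w' : E →L[ℝ] n → ℝ} (hA : DifferentiableAt ℝ A x) (hw : HasFDerivAt w w' x)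
    (hw0 : w x = 0) :
    HasFDerivAt (fun y => A y *ᵥ w y) ((A x).mulVecLin.toContinuousLinearMap ∘L w') x := by
  let M : Matrix m n ℝ →ₗ[ℝ] (n → ℝ) →ₗ[ℝ] m → ℝ := mulVecBilin ℝ ℝ
  have h := M.toContinuousBilinearMap.hasFDerivAt_of_bilinear hA.hasFDerivAt hw
  rw [hw0, map_zero, add_zero] at h
  exact h

end MatrixCalculus

section JacobianHessian

variable {n m : ℕ} {k l : WithTop ℕ∞} {x : Fin n → ℝ}

theorem jacobianMatrix_mulVec (g : (Fin n → ℝ) → Fin m → ℝ) (x v : Fin n → ℝ) :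
    jacobianMatrix g x *ᵥ v = fderiv ℝ g x v :=
  LinearMap.toMatrix'_mulVec (fderiv ℝ g x : (Fin n → ℝ) →ₗ[ℝ] Fin m → ℝ) v

theorem jacobianMatrix_apply {g : (Fin n → ℝ) → Fin m → ℝ} (hg : DifferentiableAt ℝ g x)
    (i : Fin m) (j : Fin n) : jacobianMatrix g x i j = gradientVec (fun y => g y i) x j := by
  simp [jacobianMatrix, gradientVec, fderiv_pi (differentiableAt_pi.1 hg)]

theorem transpose_jacobianMatrix_mulVec {g : (Fin n → ℝ) → Fin m → ℝ}
    (hg : DifferentiableAt ℝ g x) (μ : Fin m → ℝ) :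
    (jacobianMatrix g x)ᵀ *ᵥ μ = ∑ i, μ i • gradientVec (fun y => g y i) x := by
  ext j
  simp [mulVec, dotProduct, jacobianMatrix_apply hg, mul_comm]

theorem contDiffAt_jacobianMatrix {g : (Fin n → ℝ) → Fin m → ℝ} (hg : ContDiffAt ℝ k g x)
    (hkl : l + 1 ≤ k) : ContDiffAt ℝ l (jacobianMatrix g) x :=
  let toMatrix : ((Fin n → ℝ) →L[ℝ] Fin m → ℝ) →L[ℝ] Matrix (Fin m) (Fin n) ℝ :=
    (LinearMap.toMatrix'.toLinearMap ∘ₗ ContinuousLinearMap.coeLM ℝ).toContinuousLinearMap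
  toMatrix.contDiff.comp_contDiffAt x (hg.fderiv_right hkl)

theorem contDiffAt_gradientVec {f : (Fin n → ℝ) → ℝ} (hf : ContDiffAt ℝ k f x)
    (hkl : l + 1 ≤ k) : ContDiffAt ℝ l (gradientVec f) x :=
  contDiffAt_pi.2 fun _ => (hf.fderiv_right hkl).clm_apply contDiffAt_const

theorem differentiableAt_gradientVec {f : (Fin n → ℝ) → ℝ}
    (hf : DifferentiableAt ℝ (fderiv ℝ f) x) : DifferentiableAt ℝ (gradientVec f) x :=
  differentiableAt_pi.2 fun _ => hf.clm_apply (differentiableAt_const _)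

theorem jacobianMatrix_gradientVec {f : (Fin n → ℝ) → ℝ}
    (hf : DifferentiableAt ℝ (fderiv ℝ f) x) :
    jacobianMatrix (gradientVec f) x = (hessianMatrix f x)ᵀ := by
  ext i j
  exact jacobianMatrix_apply (differentiableAt_gradientVec hf) i j

theorem hessianMatrix_apply {f : (Fin n → ℝ) → ℝ} (hf : DifferentiableAt ℝ (fderiv ℝ f) x)
    (i j : Fin n) :
    hessianMatrix f x i j = fderiv ℝ (fderiv ℝ f) x (Pi.single i 1) (Pi.single j 1) := by
  simp [hessianMatrix, fderiv_clm_apply hf (differentiableAt_const _)]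

theorem hessianMatrix_transpose {f : (Fin n → ℝ) → ℝ} (hf : ContDiffAt ℝ 2 f x) :
    (hessianMatrix f x)ᵀ = hessianMatrix f x := by
  have hdf : DifferentiableAt ℝ (fderiv ℝ f) x :=
    (hf.fderiv_right (m := 1) le_rfl).differentiableAt one_ne_zero
  ext i j
  simp only [transpose_apply, hessianMatrix_apply hdf]
  exact (hf.isSymmSndFDerivAt (by simp)).eq _ _

theorem hasFDerivAt_gradientVec {f : (Fin n → ℝ) → ℝ} (hf : ContDiffAt ℝ 2 f x) :
    HasFDerivAt (gradientVec f) (hessianMatrix f x).mulVecLin.toContinuousLinearMap x := by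
  have hdf : DifferentiableAt ℝ (fderiv ℝ f) x :=
    (hf.fderiv_right (m := 1) le_rfl).differentiableAt one_ne_zero
  convert (differentiableAt_gradientVec hdf).hasFDerivAt using 1
  ext1 v
  rw [← jacobianMatrix_mulVec, jacobianMatrix_gradientVec hdf, hessianMatrix_transpose hf]
  rfl

end JacobianHessian

theorem Matrix.isUnit_mul_transpose_of_rank_eq {m n : Type*} [Fintype m] [Fintype n]
    [DecidableEq m] {A : Matrix m n ℝ} (h : A.rank = Fintype.card m) : IsUnit (A * Aᵀ) := by
  rw [← mulVec_surjective_iff_isUnit, ← coe_mulVecLin, ← LinearMap.range_eq_top]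
  apply Submodule.eq_top_of_finrank_eq
  rw [← rank, rank_self_mul_transpose, h, Module.finrank_fintype_fun_eq_card]

section ProjectedGradient

variable {n m : ℕ} {k l : WithTop ℕ∞} {x : Fin n → ℝ}
  {f : (Fin n → ℝ) → ℝ} {g : (Fin n → ℝ) → Fin m → ℝ}

noncomputable def iterationMap (η : ℝ) (f : (Fin n → ℝ) → ℝ) (g : (Fin n → ℝ) → Fin m → ℝ)
    (x : Fin n → ℝ) : Fin n → ℝ :=
  x - η • (projMatrix g x *ᵥ gradientVec f x) - rightInvMatrix g x *ᵥ g x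

noncomputable def lagrangianGradient (f : (Fin n → ℝ) → ℝ) (g : (Fin n → ℝ) → Fin m → ℝ)
    (μ : Fin m → ℝ) (x : Fin n → ℝ) : Fin n → ℝ :=
  gradientVec f x + (jacobianMatrix g x)ᵀ *ᵥ μ

noncomputable def lagrangianHessian (f : (Fin n → ℝ) → ℝ) (g : (Fin n → ℝ) → Fin m → ℝ)
    (μ : Fin m → ℝ) (x : Fin n → ℝ) : Matrix (Fin n) (Fin n) ℝ :=
  hessianMatrix f x + ∑ i, μ i • hessianMatrix (fun y => g y i) x

theorem projMatrix_eq_one_sub (g : (Fin n → ℝ) → Fin m → ℝ) (x : Fin n → ℝ) :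
    projMatrix g x = 1 - rightInvMatrix g x * jacobianMatrix g x :=
  rfl

theorem projMatrix_mul_transpose_jacobianMatrix
    (hx : IsUnit (jacobianMatrix g x * (jacobianMatrix g x)ᵀ)) :
    projMatrix g x * (jacobianMatrix g x)ᵀ = 0 := by
  rw [projMatrix_eq_one_sub, rightInvMatrix, Matrix.sub_mul, Matrix.one_mul, Matrix.mul_assoc,
    Matrix.mul_assoc, nonsing_inv_mul _ ((isUnit_iff_isUnit_det _).mp hx), Matrix.mul_one,
    sub_self]

theorem projMatrix_mulVec_lagrangianGradient
    (hx : IsUnit (jacobianMatrix g x * (jacobianMatrix g x)ᵀ)) (μ : Fin m → ℝ) :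
    projMatrix g x *ᵥ lagrangianGradient f g μ x = projMatrix g x *ᵥ gradientVec f x := by
  rw [lagrangianGradient, mulVec_add, mulVec_mulVec,
    projMatrix_mul_transpose_jacobianMatrix hx, zero_mulVec, add_zero]

theorem contDiffAt_jacobianMatrix_mul_transpose (hg : ContDiffAt ℝ k g x) (hkl : l + 1 ≤ k) :
    ContDiffAt ℝ l (fun y => jacobianMatrix g y * (jacobianMatrix g y)ᵀ) x :=
  have hJ := contDiffAt_jacobianMatrix hg hkl
  hJ.matrix_mul hJ.matrix_transpose

theorem contDiffAt_rightInvMatrix (hg : ContDiffAt ℝ k g x) (hkl : l + 1 ≤ k)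
    (hx : IsUnit (jacobianMatrix g x * (jacobianMatrix g x)ᵀ)) :
    ContDiffAt ℝ l (rightInvMatrix g) x :=
  (contDiffAt_jacobianMatrix hg hkl).matrix_transpose.matrix_mul
    ((contDiffAt_jacobianMatrix_mul_transpose hg hkl).matrix_inv hx)

theorem contDiffAt_projMatrix (hg : ContDiffAt ℝ k g x) (hkl : l + 1 ≤ k)
    (hx : IsUnit (jacobianMatrix g x * (jacobianMatrix g x)ᵀ)) :
    ContDiffAt ℝ l (projMatrix g) x :=
  contDiffAt_const.sub
    ((contDiffAt_rightInvMatrix hg hkl hx).matrix_mul (contDiffAt_jacobianMatrix hg hkl))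

theorem contDiffAt_iterationMap (η : ℝ) (hf : ContDiffAt ℝ k f x) (hg : ContDiffAt ℝ k g x)
    (hkl : l + 1 ≤ k) (hx : IsUnit (jacobianMatrix g x * (jacobianMatrix g x)ᵀ)) :
    ContDiffAt ℝ l (iterationMap η f g) x :=
  (contDiffAt_id.sub (((contDiffAt_projMatrix hg hkl hx).matrix_mulVec
    (contDiffAt_gradientVec hf hkl)).const_smul η)).sub
    ((contDiffAt_rightInvMatrix hg hkl hx).matrix_mulVec (hg.of_le (le_self_add.trans hkl)))

theorem lagrangianGradient_eventuallyEq (hg : ContDiffAt ℝ 2 g x) (μ : Fin m → ℝ) :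
    lagrangianGradient f g μ =ᶠ[nhds x]
      fun y => gradientVec f y + ∑ i, μ i • gradientVec (fun z => g z i) y := by
  filter_upwards [hg.eventually (by simp)] with y hy
  rw [lagrangianGradient, transpose_jacobianMatrix_mulVec (hy.differentiableAt two_ne_zero)]

theorem hasFDerivAt_lagrangianGradient (hf : ContDiffAt ℝ 2 f x) (hg : ContDiffAt ℝ 2 g x)
    (μ : Fin m → ℝ) :
    HasFDerivAt (lagrangianGradient f g μ)
      (lagrangianHessian f g μ x).mulVecLin.toContinuousLinearMap x := by
  have hsum := (hasFDerivAt_gradientVec hf).add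
    (HasFDerivAt.fun_sum (u := Finset.univ) fun i _ =>
      (hasFDerivAt_gradientVec (contDiffAt_pi.1 hg i)).const_smul (μ i))
  refine (hsum.congr_of_eventuallyEq (lagrangianGradient_eventuallyEq hg μ)).congr_fderiv ?_
  ext1 v
  simp [lagrangianHessian]

theorem iterationMap_eventuallyEq (η : ℝ) (μ : Fin m → ℝ)
    (hG : ∀ᶠ y in nhds x, IsUnit (jacobianMatrix g y * (jacobianMatrix g y)ᵀ)) :
    iterationMap η f g =ᶠ[nhds x]
      fun y => y - η • (projMatrix g y *ᵥ lagrangianGradient f g μ y)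
        - rightInvMatrix g y *ᵥ g y := by
  filter_upwards [hG] with y hy
  rw [iterationMap, projMatrix_mulVec_lagrangianGradient hy]

theorem hasFDerivAt_iterationMap (η : ℝ) {μ : Fin m → ℝ} (hf : ContDiffAt ℝ 2 f x)
    (hg : ContDiffAt ℝ 2 g x) (hx : IsUnit (jacobianMatrix g x * (jacobianMatrix g x)ᵀ))
    (hfeas : g x = 0) (hkkt : lagrangianGradient f g μ x = 0) :
    HasFDerivAt (iterationMap η f g)
      (projMatrix g x * (1 - η • lagrangianHessian f g μ x)).mulVecLin.toContinuousLinearMap x := by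
  have hG : ∀ᶠ y in nhds x, IsUnit (jacobianMatrix g y * (jacobianMatrix g y)ᵀ) :=
    (contDiffAt_jacobianMatrix_mul_transpose hg le_rfl (l := 1)).continuousAt.eventually_mem
      (Units.isOpen.mem_nhds hx)
  have hP := (contDiffAt_projMatrix hg le_rfl (l := 1) hx).differentiableAt one_ne_zero
  have hK := (contDiffAt_rightInvMatrix hg le_rfl (l := 1) hx).differentiableAt one_ne_zero
  have hS := ((hasFDerivAt_id x).sub ((HasFDerivAt.matrix_mulVec_of_eq_zero hP
    (hasFDerivAt_lagrangianGradient hf hg μ) hkkt).const_smul η)).sub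
    (HasFDerivAt.matrix_mulVec_of_eq_zero hK (hg.differentiableAt two_ne_zero).hasFDerivAt hfeas)
  refine (hS.congr_of_eventuallyEq (iterationMap_eventuallyEq η μ hG)).congr_fderiv ?_
  ext1 v
  have hKJ : rightInvMatrix g x * jacobianMatrix g x = 1 - projMatrix g x := by
    rw [projMatrix_eq_one_sub, sub_sub_cancel]
  simp only [_root_.sub_apply, _root_.smul_apply, ContinuousLinearMap.id_apply,
    ContinuousLinearMap.comp_apply, LinearMap.coe_toContinuousLinearMap', mulVecLin_apply,
    ← jacobianMatrix_mulVec, mulVec_mulVec, hKJ, mul_sub, mul_one, Matrix.mul_smul, sub_mulVec,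
    one_mulVec, smul_mulVec]
  abel

end ProjectedGradient

theorem iteration_map_jacobian_at_solution_general {n m : ℕ}
    (η : ℝ)
    (f : (Fin n → ℝ) → ℝ) (g : (Fin n → ℝ) → (Fin m → ℝ))
    (hf : ContDiff ℝ 2 f) (hg : ContDiff ℝ 2 g)
    (xstar : Fin n → ℝ) (lamstar : Fin m → ℝ)
    (hreg : (jacobianMatrix g xstar).rank = m)
    (hfeas : g xstar = 0)
    (hkkt : gradientVec f xstar + (jacobianMatrix g xstar)ᵀ.mulVec lamstar = 0) :
    ∃ U ∈ nhds xstar,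
      ContDiffOn ℝ 1
        (fun x => x - η • (projMatrix g x).mulVec (gradientVec f x)
          - (rightInvMatrix g x).mulVec (g x)) U ∧
      ∀ v : Fin n → ℝ,
        fderiv ℝ
          (fun x => x - η • (projMatrix g x).mulVec (gradientVec f x)
            - (rightInvMatrix g x).mulVec (g x)) xstar v =
        (projMatrix g xstar *
          (1 - η • (hessianMatrix f xstar
            + ∑ i, lamstar i • hessianMatrix (fun y => g y i) xstar))).mulVec v := by
  have hGram : Continuous fun x => jacobianMatrix g x * (jacobianMatrix g x)ᵀ :=
    continuous_iff_continuousAt.2 fun x =>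
      (contDiffAt_jacobianMatrix_mul_transpose hg.contDiffAt (l := 0) (by norm_num)).continuousAt
  have hxstar : IsUnit (jacobianMatrix g xstar * (jacobianMatrix g xstar)ᵀ) :=
    isUnit_mul_transpose_of_rank_eq (hreg.trans (Fintype.card_fin m).symm)
  refine ⟨_, (Units.isOpen.preimage hGram).mem_nhds hxstar, fun x hx =>
    (contDiffAt_iterationMap η hf.contDiffAt hg.contDiffAt le_rfl hx).contDiffWithinAt,
    DFunLike.congr_fun
      (hasFDerivAt_iterationMap η hf.contDiffAt hg.contDiffAt hxstar hfeas hkkt).fderiv⟩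

/-- Under the KKT conditions at a regular point `x*`, the iteration map
`S(x) = x − η P(x)∇f(x) − K(x) g(x)` is well defined and continuously differentiable near
`x*`, and its Jacobian at `x*` is `DS(x*) = P(x*)(I − η H*)`, where
`H* = D²f(x*) + Σᵢ λ*ᵢ D²gᵢ(x*)`. -/
theorem iteration_map_jacobian_at_solution {n m : ℕ} (hmn : m < n)
    (η : ℝ) (hη : 0 < η)
    (f : (Fin n → ℝ) → ℝ) (g : (Fin n → ℝ) → (Fin m → ℝ))
    (hf : ContDiff ℝ 2 f) (hg : ContDiff ℝ 2 g)
    (xstar : Fin n → ℝ) (lamstar : Fin m → ℝ)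
    (hreg : (jacobianMatrix g xstar).rank = m)
    (hfeas : g xstar = 0)
    (hkkt : gradientVec f xstar + (jacobianMatrix g xstar)ᵀ.mulVec lamstar = 0) :
    ∃ U ∈ nhds xstar,
      ContDiffOn ℝ 1
        (fun x => x - η • (projMatrix g x).mulVec (gradientVec f x)
          - (rightInvMatrix g x).mulVec (g x)) U ∧
      ∀ v : Fin n → ℝ,
        fderiv ℝ
          (fun x => x - η • (projMatrix g x).mulVec (gradientVec f x)
            - (rightInvMatrix g x).mulVec (g x)) xstar v =
        (projMatrix g xstar *
          (1 - η • (hessianMatrix f xstar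
            + ∑ i, lamstar i • hessianMatrix (fun y => g y i) xstar))).mulVec v :=
  iteration_map_jacobian_at_solution_general η f g hf hg xstar lamstar hreg hfeas hkkt
end

section
/- Let P be the matrix of the orthogonal projection of ℝⁿ onto a nonzero subspace T, and let H be a symmetric n×n real matrix that is positive definite on T, i.e. ⟨Hτ, τ⟩ > 0 for every nonzero τ ∈ T. Set μ₁ = max{⟨Hτ, τ⟩ : τ ∈ T, ‖τ‖₂ = 1}. Then for every η with 0 < η < 2/μ₁, the spectral radius of the matrix P(I − ηH) is strictly less than 1. -/
/-!
If `μ ≠ 0` is an eigenvalue of `P (I - ηH)` with complex eigenvector `v`, then `P v = v` because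
`P` is idempotent, so pairing with `v` and using `Pᴴ = P` gives `μ ‖v‖² = ⟨(I - ηH) v, v⟩`.
As `H` is real symmetric, `⟨H v, v⟩ = q(Re v) + q(Im v)` is real, where `q` is the quadratic form
of `H`; `Re v` and `Im v` lie in `T`, so `0 < ⟨H v, v⟩ ≤ μ₁ ‖v‖²`. Hence `μ = 1 - η ⟨H v, v⟩ / ‖v‖²`
is real and lies in `[1 - ημ₁, 1) ⊆ (-1, 1)`.
-/

open Matrix

theorem abs_sub_mul_lt_of_le_mul {S q μ₁ η : ℝ} (hq : 0 < q) (hqS : q ≤ μ₁ * S) (hη : 0 < η)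
    (hημ₁ : η < 2 / μ₁) : |S - η * q| < S := by
  have hμ₁ : 0 < μ₁ := (div_pos_iff_of_pos_left two_pos).mp (hη.trans hημ₁)
  rw [lt_div_iff₀ hμ₁] at hημ₁
  rw [abs_sub_lt_iff]
  constructor <;> nlinarith

namespace Matrix

variable {ι : Type*} [Fintype ι]

theorem dotProduct_mulVec_le_of_isGreatest {T : Submodule ℝ (ι → ℝ)} {H : Matrix ι ι ℝ} {μ₁ : ℝ}
    (hμ₁ : IsGreatest {r : ℝ | ∃ τ : ι → ℝ, τ ∈ T ∧ τ ⬝ᵥ τ = 1 ∧ r = H *ᵥ τ ⬝ᵥ τ} μ₁)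
    {τ : ι → ℝ} (hτ : τ ∈ T) : H *ᵥ τ ⬝ᵥ τ ≤ μ₁ * (τ ⬝ᵥ τ) := by
  rcases eq_or_ne τ 0 with rfl | hτ0
  · simp
  have hpos : 0 < τ ⬝ᵥ τ := by simpa using dotProduct_star_self_pos_iff.mpr hτ0
  set c := (√(τ ⬝ᵥ τ))⁻¹
  have hc : c * c = (τ ⬝ᵥ τ)⁻¹ := by rw [← mul_inv, Real.mul_self_sqrt hpos.le]
  have hunit : c • τ ⬝ᵥ c • τ = 1 := by
    rw [smul_dotProduct, dotProduct_smul, smul_smul, hc, smul_eq_mul, inv_mul_cancel₀ hpos.ne']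
  have hle := hμ₁.2 ⟨c • τ, T.smul_mem c hτ, hunit, rfl⟩
  rwa [mulVec_smul, smul_dotProduct, dotProduct_smul, smul_smul, hc, smul_eq_mul,
    inv_mul_le_iff₀ hpos, mul_comm] at hle

theorem add_dotProduct_mulVec_pos {T : Submodule ℝ (ι → ℝ)} {H : Matrix ι ι ℝ}
    (hpos : ∀ τ ∈ T, τ ≠ 0 → 0 < H *ᵥ τ ⬝ᵥ τ) {x y : ι → ℝ} (hx : x ∈ T) (hy : y ∈ T)
    (hxy : x ≠ 0 ∨ y ≠ 0) : 0 < H *ᵥ x ⬝ᵥ x + H *ᵥ y ⬝ᵥ y := by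
  have hnonneg : ∀ τ ∈ T, 0 ≤ H *ᵥ τ ⬝ᵥ τ := fun τ hτ ↦ by
    rcases eq_or_ne τ 0 with rfl | hτ0
    · simp
    · exact (hpos τ hτ hτ0).le
  rcases hxy with hx0 | hy0
  · exact add_pos_of_pos_of_nonneg (hpos x hx hx0) (hnonneg y hy)
  · exact add_pos_of_nonneg_of_pos (hnonneg x hx) (hpos y hy hy0)

theorem abs_one_sub_smul_mulVec_dotProduct_add_lt [DecidableEq ι] {T : Submodule ℝ (ι → ℝ)} {H : Matrix ι ι ℝ}
    {μ₁ η : ℝ} (hpos : ∀ τ ∈ T, τ ≠ 0 → 0 < H *ᵥ τ ⬝ᵥ τ)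
    (hμ₁ : IsGreatest {r : ℝ | ∃ τ : ι → ℝ, τ ∈ T ∧ τ ⬝ᵥ τ = 1 ∧ r = H *ᵥ τ ⬝ᵥ τ} μ₁)
    (hη : 0 < η) (hημ₁ : η < 2 / μ₁) {x y : ι → ℝ} (hx : x ∈ T) (hy : y ∈ T)
    (hxy : x ≠ 0 ∨ y ≠ 0) :
    |(1 - η • H) *ᵥ x ⬝ᵥ x + (1 - η • H) *ᵥ y ⬝ᵥ y| < x ⬝ᵥ x + y ⬝ᵥ y := by
  have hexpand : (1 - η • H) *ᵥ x ⬝ᵥ x + (1 - η • H) *ᵥ y ⬝ᵥ y =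
      (x ⬝ᵥ x + y ⬝ᵥ y) - η * (H *ᵥ x ⬝ᵥ x + H *ᵥ y ⬝ᵥ y) := by
    simp only [sub_mulVec, one_mulVec, smul_mulVec, sub_dotProduct, smul_dotProduct, smul_eq_mul]
    ring
  rw [hexpand]
  refine abs_sub_mul_lt_of_le_mul (add_dotProduct_mulVec_pos hpos hx hy hxy) ?_ hη hημ₁
  linarith [dotProduct_mulVec_le_of_isGreatest hμ₁ hx, dotProduct_mulVec_le_of_isGreatest hμ₁ hy]

theorem mulVec_eq_self_of_mul_mulVec_eq_smul {R : Type*} [CommRing R] [IsDomain R]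
    {P B : Matrix ι ι R} (hP : P * P = P) {μ : R} (hμ : μ ≠ 0) {v : ι → R}
    (hv : (P * B) *ᵥ v = μ • v) : P *ᵥ v = v := by
  refine smul_right_injective _ hμ (show μ • (P *ᵥ v) = μ • v from ?_)
  rw [← mulVec_smul, ← hv, mulVec_mulVec, ← mul_assoc, hP]

theorem IsHermitian.mul_star_dotProduct_self_of_mul_mulVec_eq_smul {R : Type*} [CommRing R]
    [StarRing R] {P B : Matrix ι ι R} (hP : P.IsHermitian) {μ : R} {v : ι → R}
    (hPv : P *ᵥ v = v) (hv : (P * B) *ᵥ v = μ • v) : μ * (star v ⬝ᵥ v) = star v ⬝ᵥ B *ᵥ v := by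
  rw [← smul_eq_mul, ← dotProduct_smul, ← hv, ← mulVec_mulVec, dotProduct_mulVec, ← hP.eq,
    ← star_mulVec, hPv]

end Matrix

namespace Complex

variable {ι : Type*} [Fintype ι]

theorem re_star_dotProduct (v w : ι → ℂ) :
    (star v ⬝ᵥ w).re = (re ∘ w) ⬝ᵥ (re ∘ v) + (im ∘ w) ⬝ᵥ (im ∘ v) := by
  simp [dotProduct, Finset.sum_add_distrib, mul_comm]

theorem re_comp_map_ofReal_mulVec {m : Type*} (A : Matrix m ι ℝ) (v : ι → ℂ) :
    re ∘ (A.map (↑) *ᵥ v) = A *ᵥ (re ∘ v) := by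
  ext i
  simp [mulVec, dotProduct, re_sum]

theorem im_comp_map_ofReal_mulVec {m : Type*} (A : Matrix m ι ℝ) (v : ι → ℂ) :
    im ∘ (A.map (↑) *ᵥ v) = A *ᵥ (im ∘ v) := by
  ext i
  simp [mulVec, dotProduct, im_sum]

theorem norm_star_dotProduct_map_ofReal_mulVec_self {A : Matrix ι ι ℝ} (hA : Aᵀ = A)
    (v : ι → ℂ) :
    ‖star v ⬝ᵥ A.map (↑) *ᵥ v‖ = |A *ᵥ (re ∘ v) ⬝ᵥ (re ∘ v) + A *ᵥ (im ∘ v) ⬝ᵥ (im ∘ v)| := by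
  have hA' : (A.map ((↑) : ℝ → ℂ)).IsHermitian :=
    (isHermitian_iff_isSymm.mpr hA).map _ fun r ↦ (conj_ofReal r).symm
  rw [← abs_re_eq_norm.2 (by simpa using hA'.im_star_dotProduct_mulVec_self v),
    re_star_dotProduct, re_comp_map_ofReal_mulVec, im_comp_map_ofReal_mulVec]

theorem norm_star_dotProduct_self (v : ι → ℂ) :
    ‖star v ⬝ᵥ v‖ = |(re ∘ v) ⬝ᵥ (re ∘ v) + (im ∘ v) ⬝ᵥ (im ∘ v)| := by
  classical
  simpa using norm_star_dotProduct_map_ofReal_mulVec_self (transpose_one (α := ℝ)) v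

end Complex

theorem spectral_radius_proj_one_sub_smul_lt_one_general {n : ℕ}
    (P H : Matrix (Fin n) (Fin n) ℝ)
    (hP2 : P * P = P) (hPsym : Pᵀ = P)
    (hHsym : Hᵀ = H)
    (hpos : ∀ τ : Fin n → ℝ, τ ∈ LinearMap.range P.mulVecLin → τ ≠ 0 →
      0 < H.mulVec τ ⬝ᵥ τ)
    (μ₁ : ℝ)
    (hμ₁ : IsGreatest {r : ℝ | ∃ τ : Fin n → ℝ, τ ∈ LinearMap.range P.mulVecLin ∧
      τ ⬝ᵥ τ = 1 ∧ r = H.mulVec τ ⬝ᵥ τ} μ₁) :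
    ∀ η : ℝ, 0 < η → η < 2 / μ₁ →
      ∀ μ : ℂ, (∃ v : Fin n → ℂ, v ≠ 0 ∧
          ((P * (1 - η • H)).map (fun r : ℝ => (r : ℂ))).mulVec v = μ • v) →
        ‖μ‖ < 1 := by
  intro η hη hημ₁ μ ⟨v, hv0, hv⟩
  rcases eq_or_ne μ 0 with rfl | hμ0
  · simp
  have hmap (M N : Matrix (Fin n) (Fin n) ℝ) :
      (M * N).map ((↑) : ℝ → ℂ) = M.map (↑) * N.map (↑) := Matrix.map_mul (f := Complex.ofRealHom)
  rw [hmap] at hv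
  have hPv : P.map (↑) *ᵥ v = v :=
    mulVec_eq_self_of_mul_mulVec_eq_smul (by rw [← hmap, hP2]) hμ0 hv
  have hPherm : (P.map ((↑) : ℝ → ℂ)).IsHermitian :=
    (isHermitian_iff_isSymm.mpr hPsym).map _ fun r ↦ (Complex.conj_ofReal r).symm
  have hBsym : (1 - η • H)ᵀ = 1 - η • H := by
    rw [transpose_sub, transpose_one, transpose_smul, hHsym]
  have hnorm := congrArg norm (hPherm.mul_star_dotProduct_self_of_mul_mulVec_eq_smul hPv hv)
  rw [norm_mul, Complex.norm_star_dotProduct_self,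
    Complex.norm_star_dotProduct_map_ofReal_mulVec_self hBsym] at hnorm
  have hre : Complex.re ∘ v ∈ LinearMap.range P.mulVecLin :=
    ⟨_, by rw [mulVecLin_apply, ← Complex.re_comp_map_ofReal_mulVec, hPv]⟩
  have him : Complex.im ∘ v ∈ LinearMap.range P.mulVecLin :=
    ⟨_, by rw [mulVecLin_apply, ← Complex.im_comp_map_ofReal_mulVec, hPv]⟩
  have hv0' : Complex.re ∘ v ≠ 0 ∨ Complex.im ∘ v ≠ 0 := by
    contrapose! hv0
    exact funext fun i ↦ Complex.ext (congrFun hv0.1 i) (congrFun hv0.2 i)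
  have hlt := abs_one_sub_smul_mulVec_dotProduct_add_lt hpos hμ₁ hη hημ₁ hre him hv0'
  have hS := (abs_nonneg _).trans_lt hlt
  rw [← hnorm, abs_of_pos hS] at hlt
  exact (mul_lt_iff_lt_one_left hS).mp hlt

/-- Let `P` be the orthogonal projection matrix onto a nonzero subspace
`T = Ran(P)` of `ℝⁿ` (`P² = P`, `Pᵀ = P`, `P ≠ 0`), and let `H` be a symmetric matrix which
is positive definite on `T`. Let `μ₁ = max{⟨Hτ, τ⟩ : τ ∈ T, ‖τ‖₂ = 1}`. Then for every
`0 < η < 2/μ₁`, the spectral radius of `P(I − ηH)` is `< 1`, i.e. every complex eigenvalue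
`μ` of `P(I − ηH)` satisfies `|μ| < 1`. -/
theorem spectral_radius_proj_one_sub_smul_lt_one {n : ℕ}
    (P H : Matrix (Fin n) (Fin n) ℝ)
    (hP2 : P * P = P) (hPsym : Pᵀ = P) (hP0 : P ≠ 0)
    (hHsym : Hᵀ = H)
    (hpos : ∀ τ : Fin n → ℝ, τ ∈ LinearMap.range P.mulVecLin → τ ≠ 0 →
      0 < H.mulVec τ ⬝ᵥ τ)
    (μ₁ : ℝ)
    (hμ₁ : IsGreatest {r : ℝ | ∃ τ : Fin n → ℝ, τ ∈ LinearMap.range P.mulVecLin ∧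
      τ ⬝ᵥ τ = 1 ∧ r = H.mulVec τ ⬝ᵥ τ} μ₁) :
    ∀ η : ℝ, 0 < η → η < 2 / μ₁ →
      ∀ μ : ℂ, (∃ v : Fin n → ℂ, v ≠ 0 ∧
          ((P * (1 - η • H)).map (fun r : ℝ => (r : ℂ))).mulVec v = μ • v) →
        ‖μ‖ < 1 :=
  spectral_radius_proj_one_sub_smul_lt_one_general P H hP2 hPsym hHsym hpos μ₁ hμ₁
end

section
/- Let f : ℝⁿ → ℝ and g : ℝⁿ → ℝᵐ (m < n) be continuously differentiable, let η > 0, and let x* be a regular point satisfying the KKT conditions with multiplier λ* ∈ ℝᵐ. Then the multiplier map Λ(x) = [Dg(x)∇g(x)]⁻¹ [g(x) − η Dg(x)∇f(x)] is well defined and continuous on a neighborhood of x*, and Λ(x*) = η λ*. Consequently, if x⁽ᵏ⁾ → x*, then η⁻¹ Λ(x⁽ᵏ⁾) → λ*. -/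
open Matrix

/-- The multiplier map `Λ(x) = [Dg(x)∇g(x)]⁻¹ [g(x) − η Dg(x)∇f(x)]`. -/
noncomputable def multiplierMap {n m : ℕ} (η : ℝ) (f : (Fin n → ℝ) → ℝ)
    (g : (Fin n → ℝ) → (Fin m → ℝ)) (x : Fin n → ℝ) : Fin m → ℝ :=
  (jacobianMatrix g x * (jacobianMatrix g x)ᵀ)⁻¹.mulVec
    (g x - η • (jacobianMatrix g x).mulVec (gradientVec f x))

/-!
The Gram matrix `Dg(x) ∇g(x)` has the rank of `Dg(x)`, so it is invertible at a regular point,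
and by continuity of `Dg` its determinant stays nonzero on a neighbourhood, where `Λ` is then a
composition of continuous maps. At `x*` the KKT equation gives `∇f(x*) = -∇g(x*) λ*` and
`g(x*) = 0`, so `Λ(x*) = [Dg ∇g]⁻¹ (η Dg ∇g λ*) = η λ*`.
-/

namespace Matrix

theorem isUnit_of_rank_eq_card {K m : Type*} [Field K] [Fintype m] [DecidableEq m]
    {A : Matrix m m K} (hA : A.rank = Fintype.card m) : IsUnit A := by
  rw [← mulVec_surjective_iff_isUnit]
  have hrange : LinearMap.range A.mulVecLin = ⊤ :=
    Submodule.eq_top_of_finrank_eq (by simpa [Matrix.rank] using hA)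
  exact LinearMap.range_eq_top.mp hrange

theorem isUnit_mul_transpose_of_rank_eq_card {K m n : Type*} [Field K] [LinearOrder K]
    [IsStrictOrderedRing K] [Fintype m] [Fintype n] [DecidableEq m]
    {A : Matrix m n K} (hA : A.rank = Fintype.card m) : IsUnit (A * Aᵀ) :=
  isUnit_of_rank_eq_card ((rank_self_mul_transpose A).trans hA)

end Matrix

theorem ContinuousAt.matrix_inv {X R m : Type*} [TopologicalSpace X] [Field R]
    [TopologicalSpace R] [IsTopologicalRing R] [ContinuousInv₀ R] [Fintype m] [DecidableEq m]
    {A : X → Matrix m m R} {x : X} (hA : ContinuousAt A x) (hdet : (A x).det ≠ 0) :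
    ContinuousAt (fun y => (A y)⁻¹) x := by
  have hinv : ContinuousAt Ring.inverse (A x).det := by
    simpa only [Ring.inverse_eq_inv'] using continuousAt_inv₀ hdet
  exact (continuousAt_matrix_inv (A x) hinv).comp hA

theorem ContinuousAt.matrix_mulVec {X R l m : Type*} [TopologicalSpace X]
    [NonUnitalNonAssocSemiring R] [TopologicalSpace R] [ContinuousAdd R] [ContinuousMul R]
    [Fintype m] {A : X → Matrix l m R} {v : X → m → R} {x : X}
    (hA : ContinuousAt A x) (hv : ContinuousAt v x) :
    ContinuousAt (fun y => A y *ᵥ v y) x :=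
  (continuous_fst.matrix_mulVec continuous_snd).continuousAt.comp (hA.prodMk hv)

variable {n m : ℕ} {f : (Fin n → ℝ) → ℝ} {g : (Fin n → ℝ) → (Fin m → ℝ)}

theorem continuous_jacobianMatrix (hg : ContDiff ℝ 1 g) : Continuous (jacobianMatrix g) :=
  continuous_matrix fun i _ =>
    (continuous_apply i).comp ((hg.continuous_fderiv one_ne_zero).clm_apply continuous_const)

theorem continuous_gradientVec (hf : ContDiff ℝ 1 f) : Continuous (gradientVec f) :=
  continuous_pi fun _ => (hf.continuous_fderiv one_ne_zero).clm_apply continuous_const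

theorem continuousAt_multiplierMap (η : ℝ) (hf : ContDiff ℝ 1 f) (hg : ContDiff ℝ 1 g)
    {x : Fin n → ℝ} (hx : (jacobianMatrix g x * (jacobianMatrix g x)ᵀ).det ≠ 0) :
    ContinuousAt (multiplierMap η f g) x := by
  have hJ := continuous_jacobianMatrix hg
  have hrhs : Continuous fun y => g y - η • jacobianMatrix g y *ᵥ gradientVec f y :=
    hg.continuous.sub ((hJ.matrix_mulVec (continuous_gradientVec hf)).const_smul η)
  exact ((hJ.matrix_mul hJ.matrix_transpose).continuousAt.matrix_inv hx).matrix_mulVec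
    hrhs.continuousAt

theorem multiplierMap_eq_smul_of_kkt (η : ℝ) {x : Fin n → ℝ} {lam : Fin m → ℝ}
    (hunit : IsUnit (jacobianMatrix g x * (jacobianMatrix g x)ᵀ)) (hfeas : g x = 0)
    (hkkt : gradientVec f x + (jacobianMatrix g x)ᵀ *ᵥ lam = 0) :
    multiplierMap η f g x = η • lam := by
  rw [multiplierMap, hfeas, eq_neg_of_add_eq_zero_left hkkt, mulVec_neg, smul_neg, zero_sub,
    neg_neg, mulVec_mulVec, mulVec_smul, mulVec_mulVec,
    nonsing_inv_mul _ ((isUnit_iff_isUnit_det _).mp hunit), one_mulVec]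

theorem multiplier_map_continuous_and_converges_general {n m : ℕ}
    (η : ℝ) (hη : 0 < η)
    (f : (Fin n → ℝ) → ℝ) (g : (Fin n → ℝ) → (Fin m → ℝ))
    (hf : ContDiff ℝ 1 f) (hg : ContDiff ℝ 1 g)
    (xstar : Fin n → ℝ) (lamstar : Fin m → ℝ)
    (hreg : (jacobianMatrix g xstar).rank = m)
    (hfeas : g xstar = 0)
    (hkkt : gradientVec f xstar + (jacobianMatrix g xstar)ᵀ.mulVec lamstar = 0) :
    ∃ U ∈ nhds xstar,
      ContinuousOn (multiplierMap η f g) U ∧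
      multiplierMap η f g xstar = η • lamstar ∧
      ∀ xseq : ℕ → (Fin n → ℝ),
        Filter.Tendsto xseq Filter.atTop (nhds xstar) →
        Filter.Tendsto (fun k => η⁻¹ • multiplierMap η f g (xseq k))
          Filter.atTop (nhds lamstar) := by
  set gram := fun x => jacobianMatrix g x * (jacobianMatrix g x)ᵀ
  have hgram : Continuous gram :=
    (continuous_jacobianMatrix hg).matrix_mul (continuous_jacobianMatrix hg).matrix_transpose
  have hunit : IsUnit (gram xstar) :=
    isUnit_mul_transpose_of_rank_eq_card (by rw [hreg, Fintype.card_fin])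
  have hdet : (gram xstar).det ≠ 0 := ((isUnit_iff_isUnit_det _).mp hunit).ne_zero
  have hval := multiplierMap_eq_smul_of_kkt η hunit hfeas hkkt
  refine ⟨{x | (gram x).det ≠ 0}, (isOpen_ne.preimage hgram.matrix_det).mem_nhds hdet,
    fun x hx => (continuousAt_multiplierMap η hf hg hx).continuousWithinAt, hval,
    fun xseq hseq => ?_⟩
  have hlim := ((continuousAt_multiplierMap η hf hg hdet).tendsto.comp hseq).const_smul η⁻¹
  rwa [hval, inv_smul_smul₀ hη.ne'] at hlim

/-- At a regular KKT point `x*` with multiplier `λ*`, the multiplier map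
`Λ(x) = [Dg(x)∇g(x)]⁻¹ [g(x) − η Dg(x)∇f(x)]` is well defined and continuous near `x*`,
satisfies `Λ(x*) = η λ*`, and consequently `η⁻¹ Λ(x⁽ᵏ⁾) → λ*` whenever `x⁽ᵏ⁾ → x*`. -/
theorem multiplier_map_continuous_and_converges {n m : ℕ} (hmn : m < n)
    (η : ℝ) (hη : 0 < η)
    (f : (Fin n → ℝ) → ℝ) (g : (Fin n → ℝ) → (Fin m → ℝ))
    (hf : ContDiff ℝ 1 f) (hg : ContDiff ℝ 1 g)
    (xstar : Fin n → ℝ) (lamstar : Fin m → ℝ)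
    (hreg : (jacobianMatrix g xstar).rank = m)
    (hfeas : g xstar = 0)
    (hkkt : gradientVec f xstar + (jacobianMatrix g xstar)ᵀ.mulVec lamstar = 0) :
    ∃ U ∈ nhds xstar,
      ContinuousOn (multiplierMap η f g) U ∧
      multiplierMap η f g xstar = η • lamstar ∧
      ∀ xseq : ℕ → (Fin n → ℝ),
        Filter.Tendsto xseq Filter.atTop (nhds xstar) →
        Filter.Tendsto (fun k => η⁻¹ • multiplierMap η f g (xseq k))
          Filter.atTop (nhds lamstar) :=
  multiplier_map_continuous_and_converges_general η hη f g hf hg xstar lamstar hreg hfeas hkkt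
end
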